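/- Assume n ≥ 2; L is a real n×n matrix with L_ij ≤ 0 for i ≠ j and zero row sums, whose kernel is exactly the span of 1ₙ; R = diag(r₁,…,rₙ) with 0 < rᵢ ≤ r̂ for all i; every complex eigenvalue of L·R is real, 0 is a simple eigenvalue of L·R and every nonzero eigenvalue of L·R is positive; and α_max = max_i L_ii > 0. If (i) 0 < p < 2, (ii) 0 < κ₁ − κ₂ < 2κ₁/(3p), and τ satisfies 0 < τ < p·(κ₂ − p(κ₁−κ₂)) / (2·r̂·α_max·(κ₁ − p(κ₁−κ₂))²), then the synchronization condition holds: 1 is an eigenvalue of A of algebraic multiplicity exactly 2 and every other complex eigenvalue of A has modulus strictly less than 1. -/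

import Mathlib

/-!
For `z ∉ {1, 1 - p}` two Schur complements reduce `det (z - A)` to a determinant of the form
`det (α + β • L R)`, so `χ_A(z) = ∏ q_{τμ}(z)` over the eigenvalues `μ` of `L R`, where
`q_s(z) = (z - 1)² (z - 1 + p) + s (κ₁ (z - 1 + p) - p κ₂)`. Since `q_s(1) = s p (κ₁ - κ₂)`, only
the simple eigenvalue `μ = 0` contributes to the multiplicity of `1`, with the factor
`(z - 1)² (z - 1 + p)`. Gershgorin's theorem gives `0 < μ ≤ 2 r̂ α_max` for the other eigenvalues,
and for such `μ` the parameter bounds are exactly the Jury conditions placing the roots of the real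
cubic `q_{τμ}` in the open unit disk.
-/

open Matrix Polynomial

/-- The 3n×3n transition matrix of the skewless clock-synchronization algorithm. -/
noncomputable def Amat (n : ℕ) (τ κ₁ κ₂ p : ℝ) (L R : Matrix (Fin n) (Fin n) ℝ) :
    Matrix (Fin n ⊕ Fin n ⊕ Fin n) (Fin n ⊕ Fin n ⊕ Fin n) ℝ :=
  Matrix.fromBlocks 1 (Matrix.fromCols (τ • R) 0)
    (Matrix.fromRows ((-κ₁) • L) ((-p) • L))
    (Matrix.fromBlocks 1 ((-κ₂) • (1 : Matrix (Fin n) (Fin n) ℝ)) 0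
      ((1 - p) • (1 : Matrix (Fin n) (Fin n) ℝ)))

theorem Polynomial.rootMultiplicity_multiset_prod {R : Type*} [CommRing R] [IsDomain R]
    [DecidableEq R] {s : Multiset R[X]} (hs : (0 : R[X]) ∉ s) (a : R) :
    rootMultiplicity a s.prod = (s.map (rootMultiplicity a)).sum := by
  rw [← count_roots, roots_multiset_prod s hs, Multiset.count_bind]
  simp only [count_roots]

namespace Matrix
variable {m K : Type*} [Fintype m] [DecidableEq m] [Field K]

theorem det_smul_one_add_smul [IsAlgClosed K] (N : Matrix m m K) (α β : K) :
    (α • 1 + β • N).det = (N.charpoly.roots.map fun μ => α + β * μ).prod := by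
  have hsplit := IsAlgClosed.splits N.charpoly
  have hcard : N.charpoly.roots.card = Fintype.card m := by
    rw [← hsplit.natDegree_eq_card_roots, charpoly_natDegree_eq_dim]
  rcases eq_or_ne β 0 with rfl | hβ
  · simp [hcard]
  · have hdecomp : α • (1 : Matrix m m K) + β • N = (-β) • (scalar m (-α / β) - N) := by
      rw [smul_sub, scalar_apply, ← smul_one_eq_diagonal, smul_smul]
      field_simp
      module
    rw [hdecomp, det_smul, ← eval_charpoly, hsplit.eval_eq_prod_roots_of_monic N.charpoly_monic,
      ← hcard, ← Multiset.prod_replicate, ← Multiset.map_const', ← Multiset.prod_map_mul]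
    congr 1
    refine Multiset.map_congr rfl fun μ _ => ?_
    field_simp
    ring

theorem det_fromBlocks_smul_one₁₁ {n : Type*} [Fintype n] [DecidableEq n] {a : K} (ha : a ≠ 0)
    (B : Matrix m n K) (C : Matrix n m K) (D : Matrix n n K) :
    (fromBlocks (a • 1) B C D).det = a ^ Fintype.card m * (D - a⁻¹ • (C * B)).det := by
  let _ : Invertible (a • (1 : Matrix m m K)) := invertibleOfRightInverse _ (a⁻¹ • 1) (by
    rw [smul_mul_smul_comm, mul_inv_cancel₀ ha, one_mul, one_smul])
  rw [det_fromBlocks₁₁, det_smul, det_one, mul_one,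
    show ⅟(a • (1 : Matrix m m K)) = a⁻¹ • 1 from rfl, Matrix.mul_smul, Matrix.mul_one,
    Matrix.smul_mul]

theorem det_fromBlocks_smul_one₂₂ {n : Type*} [Fintype n] [DecidableEq n] {d : K} (hd : d ≠ 0)
    (A : Matrix m m K) (B : Matrix m n K) (C : Matrix n m K) :
    (fromBlocks A B C (d • 1)).det = d ^ Fintype.card n * (A - d⁻¹ • (B * C)).det := by
  rw [← det_submatrix_equiv_self (Equiv.sumComm n m), Equiv.sumComm_apply,
    fromBlocks_submatrix_sum_swap_sum_swap, det_fromBlocks_smul_one₁₁ hd]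

theorem det_fromBlocks_clockSync [IsAlgClosed K] {a d : K} (ha : a ≠ 0) (hd : d ≠ 0)
    (τ κ₁ κ₂ p : K) (L R : Matrix m m K) :
    (fromBlocks (a • 1) (fromCols (-τ • R) (0 : Matrix m m K)) (fromRows (κ₁ • L) (p • L))
        (fromBlocks (a • 1) (κ₂ • 1) 0 (d • 1))).det
      = ((L * R).charpoly.roots.map fun μ => a ^ 2 * d + τ * μ * (κ₁ * d - p * κ₂)).prod := by
  have schur₁ : fromBlocks (a • 1) (κ₂ • 1) 0 (d • 1)
        - a⁻¹ • (fromRows (κ₁ • L) (p • L) * fromCols (-τ • R) (0 : Matrix m m K))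
      = fromBlocks (a • 1 + (τ * κ₁ / a) • (L * R)) (κ₂ • 1) ((τ * p / a) • (L * R)) (d • 1) := by
    rw [fromRows_mul_fromCols, fromBlocks_smul, sub_eq_add_neg, fromBlocks_neg, fromBlocks_add]
    congr 1 <;> simp only [Matrix.smul_mul, Matrix.mul_smul, Matrix.mul_zero, smul_zero, neg_zero,
      add_zero, zero_add, smul_smul, ← neg_smul] <;> module
  have schur₂ : a • 1 + (τ * κ₁ / a) • (L * R)
        - d⁻¹ • ((κ₂ • 1 : Matrix m m K) * (τ * p / a) • (L * R))
      = a • 1 + (τ * (κ₁ * d - p * κ₂) / (a * d)) • (L * R) := by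
    rw [Matrix.smul_mul, Matrix.one_mul, smul_smul, smul_smul, add_sub_assoc, ← sub_smul]
    congr 2
    field_simp
  rw [det_fromBlocks_smul_one₁₁ ha, schur₁, det_fromBlocks_smul_one₂₂ hd, schur₂, ← mul_assoc,
    ← mul_pow, ← det_smul, smul_add, smul_smul, smul_smul, det_smul_one_add_smul]
  congr 1
  refine Multiset.map_congr rfl fun μ _ => ?_
  field_simp

end Matrix

open Finset in
theorem le_of_isRoot_charpoly_mul_diagonal {ι : Type*} [Fintype ι] [DecidableEq ι]
    {L : Matrix ι ι ℝ} {r : ι → ℝ} {rhat αmax : ℝ} (hoff : ∀ i j, i ≠ j → L i j ≤ 0)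
    (hrow : ∀ i, ∑ j, L i j = 0) (hr : ∀ i, 0 ≤ r i) (hrhat : ∀ i, r i ≤ rhat)
    (hαmax : ∀ i, L i i ≤ αmax) {x : ℝ} (hx : (L * diagonal r).charpoly.IsRoot x) :
    x ≤ 2 * rhat * αmax := by
  obtain ⟨k, hk⟩ := eigenvalue_mem_ball (A := L * diagonal r) <|
    (Module.End.hasEigenvalue_iff_isRoot_charpoly _ _).2 (by rwa [charpoly_toLin'])
  simp only [mul_diagonal, Metric.mem_closedBall, Real.dist_eq] at hk
  have hdiag : ∑ j ∈ univ.erase k, -L k j = L k k := by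
    rw [sum_neg_distrib, neg_eq_iff_add_eq_zero,
      sum_erase_add univ (fun j => L k j) (mem_univ k), hrow]
  have hradius : ∑ j ∈ univ.erase k, ‖L k j * r j‖ ≤ rhat * L k k := by
    rw [← hdiag, mul_sum]
    refine sum_le_sum fun j hj => ?_
    rw [norm_mul, Real.norm_of_nonpos (hoff k j (ne_of_mem_erase hj).symm),
      Real.norm_of_nonneg (hr j), mul_comm rhat]
    exact mul_le_mul_of_nonneg_left (hrhat j) (neg_nonneg.2 (hoff k j (ne_of_mem_erase hj).symm))
  have hLkk : 0 ≤ L k k :=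
    hdiag ▸ sum_nonneg fun j hj => neg_nonneg.2 (hoff k j (ne_of_mem_erase hj).symm)
  have hrhat₀ : 0 ≤ rhat := (hr k).trans (hrhat k)
  calc x ≤ L k k * r k + rhat * L k k := by linarith [(abs_le.1 (hk.trans hradius)).2]
    _ ≤ 2 * rhat * αmax := by nlinarith [hrhat k, hαmax k]

theorem exists_ofReal_eq_of_mem_roots_charpoly_map {ι : Type*} [Fintype ι] [DecidableEq ι]
    {M : Matrix ι ι ℝ} (hreal : ∀ μ : ℂ, (M.map Complex.ofReal).charpoly.IsRoot μ → μ.im = 0)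
    {μ : ℂ} (hμ : μ ∈ (M.map Complex.ofReal).charpoly.roots) :
    ∃ x : ℝ, (x : ℂ) = μ ∧ M.charpoly.IsRoot x := by
  have hroot := isRoot_of_mem_roots hμ
  have hμ_re : (μ.re : ℂ) = μ := Complex.ext rfl (by rw [Complex.ofReal_im, hreal μ hroot])
  refine ⟨μ.re, hμ_re, ?_⟩
  rw [← isRoot_map_iff (f := Complex.ofRealHom) Complex.ofReal_injective, ← charpoly_map]
  exact hμ_re ▸ hroot

theorem rootMultiplicity_charpoly_map_ofReal {ι : Type*} [Fintype ι] [DecidableEq ι]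
    (M : Matrix ι ι ℝ) (x : ℝ) :
    rootMultiplicity (x : ℂ) (M.map Complex.ofReal).charpoly = rootMultiplicity x M.charpoly :=
  (charpoly_map M Complex.ofRealHom ▸
    eq_rootMultiplicity_map (f := Complex.ofRealHom) Complex.ofReal_injective x).symm

theorem exists_mem_Icc_of_mem_roots_charpoly_mul_diagonal {ι : Type*} [Fintype ι]
    [DecidableEq ι] {L : Matrix ι ι ℝ} {r : ι → ℝ} {rhat αmax : ℝ}
    (hoff : ∀ i j, i ≠ j → L i j ≤ 0) (hrow : ∀ i, ∑ j, L i j = 0) (hr : ∀ i, 0 ≤ r i)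
    (hrhat : ∀ i, r i ≤ rhat) (hαmax : ∀ i, L i i ≤ αmax)
    (hreal : ∀ μ : ℂ, ((L * diagonal r).map Complex.ofReal).charpoly.IsRoot μ → μ.im = 0)
    (hpos : ∀ μ : ℝ, (L * diagonal r).charpoly.IsRoot μ → μ ≠ 0 → 0 < μ) {μ : ℂ}
    (hμ : μ ∈ ((L * diagonal r).map Complex.ofReal).charpoly.roots) :
    ∃ x ∈ Set.Icc 0 (2 * rhat * αmax), (x : ℂ) = μ := by
  obtain ⟨x, rfl, hx⟩ := exists_ofReal_eq_of_mem_roots_charpoly_map hreal hμ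
  refine ⟨x, ⟨?_, le_of_isRoot_charpoly_mul_diagonal hoff hrow hr hrhat hαmax hx⟩, rfl⟩
  exact (eq_or_ne x 0).elim ge_of_eq fun h => (hpos x hx h).le

theorem norm_lt_one_of_quadratic_eq_zero {b c : ℝ} (h₁ : 0 < 1 + b + c) (h₂ : 0 < 1 - b + c)
    (hc : c < 1) {z : ℂ} (hz : z ^ 2 + b * z + c = 0) : ‖z‖ < 1 := by
  have hre : z.re ^ 2 - z.im ^ 2 + b * z.re + c = 0 := by
    simpa [sq] using congrArg Complex.re hz
  have him : z.im * (2 * z.re + b) = 0 := by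
    have := congrArg Complex.im hz
    simp only [sq, Complex.add_im, Complex.mul_im, Complex.ofReal_re, Complex.ofReal_im,
      Complex.zero_im] at this
    linear_combination this
  rw [← sq_lt_one_iff₀ (norm_nonneg z), Complex.sq_norm, Complex.normSq_apply]
  rcases mul_eq_zero.1 him with hy | hx
  · rw [hy] at hre ⊢
    have hlt : z.re < 1 := by
      by_contra! h
      nlinarith [mul_nonneg (sub_nonneg.2 h) (sub_nonneg.2 h)]
    have hgt : -1 < z.re := by
      by_contra! h
      nlinarith [mul_nonneg (sub_nonneg.2 h) (sub_nonneg.2 h)]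
    nlinarith
  · nlinarith

theorem norm_lt_one_of_cubic_eq_zero {a₂ a₁ a₀ : ℝ} (h₁ : 0 < 1 + a₂ + a₁ + a₀)
    (h₂ : 0 < 1 - a₂ + a₁ - a₀) (h₃ : 0 < 1 - a₀ ^ 2 + a₀ * a₂ - a₁) (h₀ : |a₀| < 1) {z : ℂ}
    (hz : z ^ 3 + a₂ * z ^ 2 + a₁ * z + a₀ = 0) : ‖z‖ < 1 := by
  obtain ⟨r, ⟨hr₁, hr₂⟩, hr⟩ : ∃ r ∈ Set.Ioo (-1 : ℝ) 1, r ^ 3 + a₂ * r ^ 2 + a₁ * r + a₀ = 0 :=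
    intermediate_value_Ioo (by norm_num) (by fun_prop) ⟨by linarith, by linarith⟩
  set b := a₂ + r
  set c := a₁ + r * b
  have ha₀ : a₀ = -(r * c) := by linear_combination hr
  obtain ⟨h₀₁, h₀₂⟩ := abs_lt.1 h₀
  have hq₁ : 0 < 1 + b + c := by nlinarith
  have hq₂ : 0 < 1 - b + c := by nlinarith
  have hc : c < 1 := by
    -- `1 - a₀² + a₀ a₂ - a₁ = (1 - c) (1 + r b + r² c)` and the second factor is positive
    have : 0 < 1 + r * b + r ^ 2 * c := by
      rcases le_or_gt 0 r with hr0 | hr0 <;> nlinarith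
    nlinarith
  have hfac : (z - r) * (z ^ 2 + b * z + c) = 0 := by
    push_cast [b, c, ha₀] at hz ⊢
    linear_combination hz
  rcases mul_eq_zero.1 hfac with h | h
  · rw [sub_eq_zero.1 h, Complex.norm_real, Real.norm_eq_abs, abs_lt]
    exact ⟨hr₁, hr₂⟩
  · exact norm_lt_one_of_quadratic_eq_zero hq₁ hq₂ hc h

noncomputable def clockSyncCubic (p κ₁ κ₂ s : ℂ) : ℂ[X] :=
  (X - 1) ^ 2 * (X - C (1 - p)) + C s * (C κ₁ * (X - C (1 - p)) - C (p * κ₂))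

theorem clockSyncCubic_monic (p κ₁ κ₂ s : ℂ) : (clockSyncCubic p κ₁ κ₂ s).Monic := by
  unfold clockSyncCubic
  monicity!

theorem clockSyncCubic_zero (p κ₁ κ₂ : ℂ) :
    clockSyncCubic p κ₁ κ₂ 0 = (X - C 1) ^ 2 * (X - C (1 - p)) := by
  simp [clockSyncCubic]

theorem rootMultiplicity_one_clockSyncCubic {p κ₁ κ₂ : ℂ} (hp : p ≠ 0) (hκ : κ₁ ≠ κ₂) (s : ℂ) :
    rootMultiplicity 1 (clockSyncCubic p κ₁ κ₂ s) = if s = 0 then 2 else 0 := by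
  split_ifs with hs
  · have h1p : (1 : ℂ) ≠ 1 - p := by simpa [eq_sub_iff_add_eq] using hp
    rw [hs, clockSyncCubic_zero, rootMultiplicity_mul
        (mul_ne_zero (pow_ne_zero _ (X_sub_C_ne_zero 1)) (X_sub_C_ne_zero _)),
      rootMultiplicity_X_sub_C_pow, rootMultiplicity_X_sub_C, if_neg h1p]
  · refine rootMultiplicity_eq_zero fun h => ?_
    have : s * p * (κ₁ - κ₂) = 0 := by
      rw [← h.eq_zero]
      simp [clockSyncCubic]
      ring
    exact mul_ne_zero (mul_ne_zero hs hp) (sub_ne_zero.2 hκ) this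

theorem rootMultiplicity_one_prod_clockSyncCubic {p κ₁ κ₂ τ : ℂ} (hp : p ≠ 0) (hκ : κ₁ ≠ κ₂)
    (hτ : τ ≠ 0) {ρ : Multiset ℂ} (hρ : ρ.count 0 = 1) :
    rootMultiplicity 1 (ρ.map fun μ => clockSyncCubic p κ₁ κ₂ (τ * μ)).prod = 2 := by
  have hne : (0 : ℂ[X]) ∉ ρ.map fun μ => clockSyncCubic p κ₁ κ₂ (τ * μ) := by
    simpa only [Multiset.mem_map, not_exists, not_and] using
      fun μ _ => (clockSyncCubic_monic _ _ _ _).ne_zero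
  have hmult := rootMultiplicity_one_clockSyncCubic hp hκ
  rw [rootMultiplicity_multiset_prod hne, Multiset.map_map,
    Multiset.sum_map_eq_nsmul_single 0 fun μ hμ _ => by simp [hmult, hμ, hτ], hρ]
  simp [hmult]

theorem eval_clockSyncCubic (p κ₁ κ₂ s z : ℂ) :
    (clockSyncCubic p κ₁ κ₂ s).eval z
      = z ^ 3 + (p - 3) * z ^ 2 + (3 - 2 * p + s * κ₁) * z
          + (p - 1 - s * (κ₁ - p * (κ₁ - κ₂))) := by
  simp [clockSyncCubic]
  ring

theorem norm_lt_one_of_isRoot_clockSyncCubic {p κ₁ κ₂ t : ℝ} (hp₀ : 0 < p) (hp₂ : p < 2)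
    (hδ : 0 < κ₁ - κ₂) (hK : 0 < κ₁ - p * (κ₁ - κ₂)) (ht : 0 ≤ t)
    (htK : t * (κ₁ - p * (κ₁ - κ₂)) ^ 2 < p * (κ₂ - p * (κ₁ - κ₂))) {z : ℂ}
    (hz : (clockSyncCubic p κ₁ κ₂ t).IsRoot z) (hz₁ : z ≠ 1) : ‖z‖ < 1 := by
  rcases ht.eq_or_lt with rfl | ht
  · rw [Complex.ofReal_zero, clockSyncCubic_zero, IsRoot, eval_mul, eval_pow] at hz
    simp only [eval_sub, eval_X, eval_C, mul_eq_zero, pow_eq_zero_iff two_ne_zero, sub_eq_zero,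
      hz₁, false_or] at hz
    rw [hz, ← Complex.ofReal_one, ← Complex.ofReal_sub, Complex.norm_real, Real.norm_eq_abs,
      abs_lt]
    constructor <;> linarith
  have htK₀ : 0 < t * (κ₁ - p * (κ₁ - κ₂)) := mul_pos ht hK
  have htδ : 0 < t * (p * (κ₁ - κ₂)) := mul_pos ht (mul_pos hp₀ hδ)
  have htKp : t * (κ₁ - p * (κ₁ - κ₂)) < p := by nlinarith
  refine norm_lt_one_of_cubic_eq_zero (a₂ := p - 3) (a₁ := 3 - 2 * p + t * κ₁)
    (a₀ := p - 1 - t * (κ₁ - p * (κ₁ - κ₂))) ?_ ?_ ?_ ?_ ?_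
  · linarith
  · linarith
  · -- equals `t (p (κ₂ - p (κ₁ - κ₂)) - t (κ₁ - p (κ₁ - κ₂))²)`: the origin of the bound on `τ`
    nlinarith
  · rw [abs_lt]; constructor <;> linarith
  · rw [IsRoot, eval_clockSyncCubic] at hz
    push_cast
    linear_combination hz

theorem scalar_sub_map_Amat (n : ℕ) (τ κ₁ κ₂ p : ℝ) (L R : Matrix (Fin n) (Fin n) ℝ) (z : ℂ) :
    scalar _ z - (Amat n τ κ₁ κ₂ p L R).map Complex.ofReal
      = fromBlocks ((z - 1) • 1) (fromCols (-(τ : ℂ) • R.map Complex.ofReal) 0)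
          (fromRows ((κ₁ : ℂ) • L.map Complex.ofReal) ((p : ℂ) • L.map Complex.ofReal))
          (fromBlocks ((z - 1) • 1) ((κ₂ : ℂ) • 1) 0 ((z - (1 - p)) • 1)) := by
  ext (i | i | i) (j | j | j) <;>
    simp [Amat, one_apply, diagonal_apply] <;> split_ifs <;> push_cast <;> ring

theorem charpoly_map_Amat (n : ℕ) (τ κ₁ κ₂ p : ℝ) (L R : Matrix (Fin n) (Fin n) ℝ) :
    ((Amat n τ κ₁ κ₂ p L R).map Complex.ofReal).charpoly
      = (((L * R).map Complex.ofReal).charpoly.roots.map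
          fun μ => clockSyncCubic p κ₁ κ₂ (τ * μ)).prod := by
  refine eq_of_infinite_eval_eq _ _
    (((Set.finite_singleton (1 - (p : ℂ))).insert 1).infinite_compl.mono ?_)
  rintro z hz
  simp only [Set.mem_compl_iff, Set.mem_insert_iff, Set.mem_singleton_iff, not_or] at hz
  have hLR : (L * R).map Complex.ofReal = L.map Complex.ofReal * R.map Complex.ofReal :=
    Matrix.map_mul (f := Complex.ofRealHom)
  rw [Set.mem_ofPred_eq, eval_charpoly, scalar_sub_map_Amat, hLR,
    det_fromBlocks_clockSync (sub_ne_zero.2 hz.1) (sub_ne_zero.2 hz.2), eval_multiset_prod,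
    Multiset.map_map]
  refine congrArg _ (Multiset.map_congr rfl fun μ _ => ?_)
  simp [clockSyncCubic]

theorem stmt18_general (n : ℕ) (hn : 2 ≤ n) (τ κ₁ κ₂ p : ℝ)
    (L : Matrix (Fin n) (Fin n) ℝ)
    (hoff : ∀ i j : Fin n, i ≠ j → L i j ≤ 0)
    (hrow : ∀ i : Fin n, ∑ j, L i j = 0)
    (r : Fin n → ℝ) (rhat : ℝ) (hr : ∀ i, 0 < r i) (hrhat : ∀ i, r i ≤ rhat)
    (R : Matrix (Fin n) (Fin n) ℝ) (hR : R = Matrix.diagonal r)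
    (hreal : ∀ μ : ℂ, ((L * R).map Complex.ofReal).charpoly.IsRoot μ → μ.im = 0)
    (hsimple : Polynomial.rootMultiplicity (0 : ℝ) (L * R).charpoly = 1)
    (hpos : ∀ μ : ℝ, (L * R).charpoly.IsRoot μ → μ ≠ 0 → 0 < μ)
    (αmax : ℝ) (hα : αmax = ⨆ i : Fin n, L i i) (hαpos : 0 < αmax)
    (hp0 : 0 < p) (hp2 : p < 2)
    (hκ : 0 < κ₁ - κ₂) (hκ' : κ₁ - κ₂ < 2 * κ₁ / (3 * p))
    (hτ0 : 0 < τ)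
    (hτ : τ < p * (κ₂ - p * (κ₁ - κ₂)) /
      (2 * rhat * αmax * (κ₁ - p * (κ₁ - κ₂)) ^ 2)) :
    Polynomial.rootMultiplicity (1 : ℂ)
      ((Amat n τ κ₁ κ₂ p L R).map Complex.ofReal).charpoly = 2 ∧
    ∀ μ : ℂ, ((Amat n τ κ₁ κ₂ p L R).map Complex.ofReal).charpoly.IsRoot μ →
      μ ≠ 1 → ‖μ‖ < 1 := by
  subst hR
  set K := κ₁ - p * (κ₁ - κ₂)
  have hK : 0 < K := by
    have := (lt_div_iff₀ (by positivity)).1 hκ'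
    nlinarith
  have hrhat₀ : 0 < rhat := (hr ⟨0, by omega⟩).trans_le (hrhat ⟨0, by omega⟩)
  have hτK : τ * (2 * rhat * αmax) * K ^ 2 < p * (κ₂ - p * (κ₁ - κ₂)) := by
    have := (lt_div_iff₀ (by positivity)).1 hτ
    linarith
  have hαmax (i : Fin n) : L i i ≤ αmax :=
    hα ▸ le_ciSup (f := fun i => L i i) (Finite.bddAbove_range _) i
  rw [charpoly_map_Amat]
  refine ⟨rootMultiplicity_one_prod_clockSyncCubic (by exact_mod_cast hp0.ne')
    (by exact_mod_cast (sub_pos.1 hκ).ne') (by exact_mod_cast hτ0.ne') ?_, fun z hz hz₁ => ?_⟩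
  · rw [count_roots, ← Complex.ofReal_zero, rootMultiplicity_charpoly_map_ofReal, hsimple]
  · rw [IsRoot, eval_multiset_prod, Multiset.prod_eq_zero_iff, Multiset.map_map] at hz
    obtain ⟨μ, hμ, hzμ⟩ := Multiset.mem_map.1 hz
    obtain ⟨x, ⟨hx₀, hxM⟩, rfl⟩ :=
      exists_mem_Icc_of_mem_roots_charpoly_mul_diagonal hoff hrow (hr · |>.le) hrhat hαmax hreal
        hpos hμ
    refine norm_lt_one_of_isRoot_clockSyncCubic (t := τ * x) hp0 hp2 hκ hK (by positivity) ?_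
      (by push_cast; exact hzμ) hz₁
    calc τ * x * K ^ 2 ≤ τ * (2 * rhat * αmax) * K ^ 2 := by gcongr
      _ < p * (κ₂ - p * (κ₁ - κ₂)) := hτK

/-- Topology-independent sufficient condition of Eq. (18) of the paper: combining
Theorem 3 with the Gershgorin bound `μ_max(LR) ≤ 2 α_max r̂`, the parameter conditions
(i) `0 < p < 2`, (ii) `0 < κ₁−κ₂ < 2κ₁/(3p)` and
`0 < τ < p(κ₂ − p(κ₁−κ₂))/(2 r̂ α_max (κ₁ − p(κ₁−κ₂))²)` guarantee the spectral
synchronization condition on `A`. -/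
theorem stmt18 (n : ℕ) (hn : 2 ≤ n) (τ κ₁ κ₂ p : ℝ)
    (L : Matrix (Fin n) (Fin n) ℝ)
    (hoff : ∀ i j : Fin n, i ≠ j → L i j ≤ 0)
    (hrow : ∀ i : Fin n, ∑ j, L i j = 0)
    (hker : ∀ v : Fin n → ℝ, L *ᵥ v = 0 → ∃ c : ℝ, v = fun _ => c)
    (r : Fin n → ℝ) (rhat : ℝ) (hr : ∀ i, 0 < r i) (hrhat : ∀ i, r i ≤ rhat)
    (R : Matrix (Fin n) (Fin n) ℝ) (hR : R = Matrix.diagonal r)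
    (hreal : ∀ μ : ℂ, ((L * R).map Complex.ofReal).charpoly.IsRoot μ → μ.im = 0)
    (hsimple : Polynomial.rootMultiplicity (0 : ℝ) (L * R).charpoly = 1)
    (hpos : ∀ μ : ℝ, (L * R).charpoly.IsRoot μ → μ ≠ 0 → 0 < μ)
    (αmax : ℝ) (hα : αmax = ⨆ i : Fin n, L i i) (hαpos : 0 < αmax)
    (hp0 : 0 < p) (hp2 : p < 2)
    (hκ : 0 < κ₁ - κ₂) (hκ' : κ₁ - κ₂ < 2 * κ₁ / (3 * p))
    (hτ0 : 0 < τ)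
    (hτ : τ < p * (κ₂ - p * (κ₁ - κ₂)) /
      (2 * rhat * αmax * (κ₁ - p * (κ₁ - κ₂)) ^ 2)) :
    Polynomial.rootMultiplicity (1 : ℂ)
      ((Amat n τ κ₁ κ₂ p L R).map Complex.ofReal).charpoly = 2 ∧
    ∀ μ : ℂ, ((Amat n τ κ₁ κ₂ p L R).map Complex.ofReal).charpoly.IsRoot μ →
      μ ≠ 1 → ‖μ‖ < 1 :=
  stmt18_general n hn τ κ₁ κ₂ p L hoff hrow r rhat hr hrhat R hR hreal hsimple hpos αmax hα hαpos
    hp0 hp2 hκ hκ' hτ0 hτ
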